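/- arXiv:1402.5179 — 7 statements merged into one kernel-verified Lean document; each statement's English description precedes it below -/
import Mathlib

section
/- Let u₁, u₂ ∈ ℝ be such that u = u₁·(k₁/‖k₁‖) + u₂·(k₂/‖k₂‖) is a unit vector in ℝ². Then for every t ∈ ℝ: ‖K + t·u‖² = ‖K‖² + u₁·(4π/(a√3))·t + t², ‖K + t·Ru‖² = ‖K‖² + (u₂ − u₁)·(4π/(a√3))·t + t², and ‖K + t·R²u‖² = ‖K‖² − u₂·(4π/(a√3))·t + t². -/
open Real

noncomputable section

/-- ℝ² with the Euclidean norm. -/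
abbrev E2 := EuclideanSpace ℝ (Fin 2)

/-- Build a vector in ℝ². -/
def vec (x y : ℝ) : E2 := (WithLp.equiv 2 _).symm ![x, y]

/-- Dual basis vector k₁ = (4π/(a√3))(1/2, √3/2). -/
def k1 (a : ℝ) : E2 := (4 * π / (a * Real.sqrt 3)) • vec (1/2) (Real.sqrt 3 / 2)

/-- Dual basis vector k₂ = (4π/(a√3))(1/2, −√3/2). -/
def k2 (a : ℝ) : E2 := (4 * π / (a * Real.sqrt 3)) • vec (1/2) (-(Real.sqrt 3) / 2)

/-- Dual lattice vector ξ_m = m₁k₁ + m₂k₂. -/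
def xiv (a : ℝ) (m : ℤ × ℤ) : E2 := (m.1 : ℝ) • k1 a + (m.2 : ℝ) • k2 a

/-- The Dirac point K = (2/3)k₁ + (1/3)k₂. -/
def KD (a : ℝ) : E2 := (2/3 : ℝ) • k1 a + (1/3 : ℝ) • k2 a

/-- Lattice basis vector v₁ = a(√3/2, 1/2). -/
def v1 (a : ℝ) : E2 := a • vec (Real.sqrt 3 / 2) (1/2)

/-- Lattice basis vector v₂ = a(√3/2, −1/2). -/
def v2 (a : ℝ) : E2 := a • vec (Real.sqrt 3 / 2) (-(1/2))

/-- x₀ = (2/3)(v₁ + v₂). -/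
def x0 (a : ℝ) : E2 := (2/3 : ℝ) • (v1 a + v2 a)

/-- Rotation of ℝ² by 2π/3, i.e. the matrix (1/2)[[−1, −√3], [√3, −1]]. -/
def Rrot (v : E2) : E2 :=
  vec ((-v 0 - Real.sqrt 3 * v 1) / 2) ((Real.sqrt 3 * v 0 - v 1) / 2)

/-- T(m₁, m₂) = (−m₁ + m₂ − 1, −m₁ − 1). -/
def T (m : ℤ × ℤ) : ℤ × ℤ := (-m.1 + m.2 - 1, -m.1 - 1)


lemma norm_sq_E2 (v : E2) : ‖v‖ ^ 2 = v 0 ^ 2 + v 1 ^ 2 := by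
  rw [EuclideanSpace.norm_eq, Real.sq_sqrt (by positivity)]
  simp [Fin.sum_univ_two, Real.norm_eq_abs, sq_abs]

lemma norm_k1 (a : ℝ) (ha : 0 < a) : ‖k1 a‖ = 4 * π / (a * Real.sqrt 3) := by
  have hc : (0:ℝ) ≤ 4 * π / (a * Real.sqrt 3) := by positivity
  have h3 : Real.sqrt 3 ^ 2 = 3 := Real.sq_sqrt (by norm_num)
  have h0 : k1 a 0 = 4 * π / (a * Real.sqrt 3) * (1/2) := rfl
  have h1 : k1 a 1 = 4 * π / (a * Real.sqrt 3) * (Real.sqrt 3 / 2) := rfl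
  have hsq : ‖k1 a‖ ^ 2 = (4 * π / (a * Real.sqrt 3)) ^ 2 := by
    rw [norm_sq_E2, h0, h1]; linear_combination (4 * π / (a * Real.sqrt 3))^2/4 * h3
  have := Real.sqrt_sq (norm_nonneg (k1 a))
  rw [← this, hsq, Real.sqrt_sq hc]

lemma norm_k2 (a : ℝ) (ha : 0 < a) : ‖k2 a‖ = 4 * π / (a * Real.sqrt 3) := by
  have hc : (0:ℝ) ≤ 4 * π / (a * Real.sqrt 3) := by positivity
  have h3 : Real.sqrt 3 ^ 2 = 3 := Real.sq_sqrt (by norm_num)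
  have h0 : k2 a 0 = 4 * π / (a * Real.sqrt 3) * (1/2) := rfl
  have h1 : k2 a 1 = 4 * π / (a * Real.sqrt 3) * (-(Real.sqrt 3) / 2) := rfl
  have hsq : ‖k2 a‖ ^ 2 = (4 * π / (a * Real.sqrt 3)) ^ 2 := by
    rw [norm_sq_E2, h0, h1]; linear_combination (4 * π / (a * Real.sqrt 3))^2/4 * h3
  have := Real.sqrt_sq (norm_nonneg (k2 a))
  rw [← this, hsq, Real.sqrt_sq hc]

/-- expansion of ‖K + t·u‖², ‖K + t·Ru‖², ‖K + t·R²u‖² for a unit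
vector u = u₁·(k₁/‖k₁‖) + u₂·(k₂/‖k₂‖). -/
theorem stmt_1 (a : ℝ) (ha : 0 < a) (u₁ u₂ : ℝ)
    (hu : ‖u₁ • (‖k1 a‖⁻¹ • k1 a) + u₂ • (‖k2 a‖⁻¹ • k2 a)‖ = 1) (t : ℝ) :
    letI u : E2 := u₁ • (‖k1 a‖⁻¹ • k1 a) + u₂ • (‖k2 a‖⁻¹ • k2 a)
    ‖KD a + t • u‖ ^ 2 = ‖KD a‖ ^ 2 + u₁ * (4 * π / (a * Real.sqrt 3)) * t + t ^ 2 ∧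
    ‖KD a + t • Rrot u‖ ^ 2
      = ‖KD a‖ ^ 2 + (u₂ - u₁) * (4 * π / (a * Real.sqrt 3)) * t + t ^ 2 ∧
    ‖KD a + t • Rrot (Rrot u)‖ ^ 2
      = ‖KD a‖ ^ 2 - u₂ * (4 * π / (a * Real.sqrt 3)) * t + t ^ 2 := by
  have h3 : Real.sqrt 3 ^ 2 = 3 := Real.sq_sqrt (by norm_num)
  have hs : (0:ℝ) < Real.sqrt 3 := Real.sqrt_pos.mpr (by norm_num)
  set c := 4 * π / (a * Real.sqrt 3) with hc
  have hcpos : 0 < c := by rw [hc]; positivity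
  have hcne : c ≠ 0 := ne_of_gt hcpos
  have hk1 : ‖k1 a‖ = c := norm_k1 a ha
  have hk2 : ‖k2 a‖ = c := norm_k2 a ha
  set u : E2 := u₁ • (‖k1 a‖⁻¹ • k1 a) + u₂ • (‖k2 a‖⁻¹ • k2 a) with hudef
  have hk10 : k1 a 0 = c * (1/2) := rfl
  have hk11 : k1 a 1 = c * (Real.sqrt 3 / 2) := rfl
  have hk20 : k2 a 0 = c * (1/2) := rfl
  have hk21 : k2 a 1 = c * (-(Real.sqrt 3) / 2) := rfl
  have hu0 : u 0 = (u₁ + u₂) / 2 := by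
    simp only [hudef, PiLp.add_apply, PiLp.smul_apply, smul_eq_mul, hk1, hk2, hk10, hk20]
    field_simp
  have hu1 : u 1 = Real.sqrt 3 * (u₁ - u₂) / 2 := by
    simp only [hudef, PiLp.add_apply, PiLp.smul_apply, smul_eq_mul, hk1, hk2, hk11, hk21]
    field_simp; ring
  have huu : u₁ ^ 2 - u₁ * u₂ + u₂ ^ 2 = 1 := by
    have h2 : ‖u‖ ^ 2 = 1 := by rw [hu]; norm_num
    rw [norm_sq_E2, hu0, hu1] at h2
    linear_combination h2 - (u₁ - u₂)^2/4 * h3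
  have hK0 : KD a 0 = c / 2 := by
    simp only [KD, PiLp.add_apply, PiLp.smul_apply, smul_eq_mul, hk10, hk20]; ring
  have hK1 : KD a 1 = c * Real.sqrt 3 / 6 := by
    simp only [KD, PiLp.add_apply, PiLp.smul_apply, smul_eq_mul, hk11, hk21]; ring
  have hRu0 : Rrot u 0 = (u₂ - 2 * u₁) / 2 := by
    show (-u 0 - Real.sqrt 3 * u 1) / 2 = _
    rw [hu0, hu1]; linear_combination -(u₁ - u₂)/4 * h3
  have hRu1 : Rrot u 1 = Real.sqrt 3 * u₂ / 2 := by
    show (Real.sqrt 3 * u 0 - u 1) / 2 = _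
    rw [hu0, hu1]; ring
  have hR2u0 : Rrot (Rrot u) 0 = (u₁ - 2 * u₂) / 2 := by
    show (-(Rrot u 0) - Real.sqrt 3 * Rrot u 1) / 2 = _
    rw [hRu0, hRu1]; linear_combination -u₂/4 * h3
  have hR2u1 : Rrot (Rrot u) 1 = -(Real.sqrt 3 * u₁) / 2 := by
    show (Real.sqrt 3 * Rrot u 0 - Rrot u 1) / 2 = _
    rw [hRu0, hRu1]; ring
  refine ⟨?_, ?_, ?_⟩
  · rw [norm_sq_E2, norm_sq_E2 (KD a)]
    simp only [PiLp.add_apply, PiLp.smul_apply, smul_eq_mul, hK0, hK1, hu0, hu1, ← hc]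
    linear_combination ((c/6 + t*(u₁-u₂)/2)^2 - (c/6)^2) * h3 + t^2 * huu
  · rw [norm_sq_E2, norm_sq_E2 (KD a)]
    simp only [PiLp.add_apply, PiLp.smul_apply, smul_eq_mul, hRu0, hRu1, hK0, hK1, ← hc]
    linear_combination ((c/6 + t*u₂/2)^2 - (c/6)^2) * h3 + t^2 * huu
  · rw [norm_sq_E2, norm_sq_E2 (KD a)]
    simp only [PiLp.add_apply, PiLp.smul_apply, smul_eq_mul, hR2u0, hR2u1, hK0, hK1, ← hc]
    linear_combination ((c/6 - t*u₁/2)^2 - (c/6)^2) * h3 + t^2 * huu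
end
end

section
/- The set of lattice indices m = (m₁, m₂) ∈ ℤ² such that ‖ξ_m + K‖ = ‖K‖ is exactly {(0,0), (−1,0), (−1,−1)}. -/
open Real

noncomputable section

lemma norm_eq_iff' (u v : E2) : ‖u‖ = ‖v‖ ↔ u 0^2 + u 1^2 = v 0^2 + v 1^2 := by
  rw [EuclideanSpace.norm_eq, EuclideanSpace.norm_eq]
  simp only [Real.norm_eq_abs, sq_abs, Fin.sum_univ_two]
  rw [Real.sqrt_inj (add_nonneg (sq_nonneg _) (sq_nonneg _))
    (add_nonneg (sq_nonneg _) (sq_nonneg _))]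

lemma key_int (m1 m2 : ℤ) : 3*(m1+m2+1)^2 + (3*(m1-m2)+1)^2 = 4 ↔
    (m1 = 0 ∧ m2 = 0) ∨ (m1 = -1 ∧ m2 = 0) ∨ (m1 = -1 ∧ m2 = -1) := by
  constructor
  · intro h
    have hp1 : -1 ≤ m1+m2+1 := by nlinarith [sq_nonneg (m1+m2+2), sq_nonneg (3*(m1-m2)+1)]
    have hp2 : m1+m2+1 ≤ 1 := by nlinarith [sq_nonneg (m1+m2), sq_nonneg (3*(m1-m2)+1)]
    have hq1 : -2 ≤ 3*(m1-m2)+1 := by nlinarith [sq_nonneg (3*(m1-m2)+3), sq_nonneg (m1+m2+1)]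
    have hq2 : 3*(m1-m2)+1 ≤ 2 := by nlinarith [sq_nonneg (3*(m1-m2)-1), sq_nonneg (m1+m2+1)]
    have h1a : -1 ≤ m1 := by omega
    have h1b : m1 ≤ 0 := by omega
    have h2a : -1 ≤ m2 := by omega
    have h2b : m2 ≤ 0 := by omega
    interval_cases m1 <;> interval_cases m2 <;> revert h <;> norm_num
  · rintro (⟨rfl, rfl⟩ | ⟨rfl, rfl⟩ | ⟨rfl, rfl⟩) <;> norm_num

/-- the lattice indices m with ‖ξ_m + K‖ = ‖K‖ are exactly
(0,0), (−1,0), (−1,−1). -/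
theorem stmt_3 (a : ℝ) (ha : 0 < a) :
    {m : ℤ × ℤ | ‖xiv a m + KD a‖ = ‖KD a‖}
      = {((0 : ℤ), (0 : ℤ)), (-1, 0), (-1, -1)} := by
  have hs : Real.sqrt 3 ^ 2 = 3 := Real.sq_sqrt (by norm_num)
  have hs0 : (0:ℝ) < Real.sqrt 3 := Real.sqrt_pos.mpr (by norm_num)
  set c : ℝ := 4 * π / (a * Real.sqrt 3) with hc_def
  have hc : 0 < c := by
    apply div_pos (by positivity) (by positivity)
  ext ⟨m1, m2⟩
  simp only [Set.mem_setOf_eq, Set.mem_insert_iff, Set.mem_singleton_iff, Prod.mk.injEq]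
  have e0 : (xiv a (m1, m2) + KD a) 0 = c * ((m1+m2+1)/2) := by
    simp only [hc_def]
    simp [xiv, KD, k1, k2, vec, PiLp.add_apply, PiLp.smul_apply, smul_eq_mul]
    ring
  have e1 : (xiv a (m1, m2) + KD a) 1 = c * (Real.sqrt 3 * (3*(m1-m2)+1)/6) := by
    simp only [hc_def]
    simp [xiv, KD, k1, k2, vec, PiLp.add_apply, PiLp.smul_apply, smul_eq_mul]
    ring
  have eK0 : (KD a) 0 = c * (1/2) := by
    simp only [hc_def]
    simp [KD, k1, k2, vec, PiLp.add_apply, PiLp.smul_apply, smul_eq_mul]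
    ring
  have eK1 : (KD a) 1 = c * (Real.sqrt 3/6) := by
    simp only [hc_def]
    simp [KD, k1, k2, vec, PiLp.add_apply, PiLp.smul_apply, smul_eq_mul]
    ring
  rw [norm_eq_iff', e0, e1, eK0, eK1]
  rw [← key_int m1 m2]
  have hcancel : ∀ X Y : ℝ, c^2 * X = c^2 * Y → X = Y := fun X Y h =>
    mul_left_cancel₀ (pow_ne_zero 2 hc.ne') h
  constructor
  · intro h
    have h2 : c^2 * (3*((m1:ℝ)+m2+1)^2 + (3*((m1:ℝ)-m2)+1)^2) = c^2 * 4 := by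
      linear_combination 12*h - c^2*((3*((m1:ℝ)-m2)+1)^2 - 1)/3 * hs
    have := hcancel _ _ h2
    exact_mod_cast this
  · intro h
    have h' : (3*((m1:ℝ)+m2+1)^2 + (3*((m1:ℝ)-m2)+1)^2) = 4 := by exact_mod_cast h
    linear_combination (c^2/12)*h' + c^2*((3*((m1:ℝ)-m2)+1)^2-1)/36 * hs
end
end

section
/- For every m = (m₁, m₂) ∈ ℤ², one has ξ_{T(m)} + K = R(ξ_m + K); consequently ‖ξ_{T(m)} + K‖ = ‖ξ_m + K‖. -/
open Real

noncomputable section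

lemma norm_Rrot (v : E2) : ‖Rrot v‖ = ‖v‖ := by
  have hs : Real.sqrt 3 * Real.sqrt 3 = 3 := Real.mul_self_sqrt (by norm_num)
  rw [EuclideanSpace.norm_eq, EuclideanSpace.norm_eq]
  congr 1
  rw [Fin.sum_univ_two, Fin.sum_univ_two]
  simp only [Rrot, vec, WithLp.equiv_symm_apply, PiLp.toLp_apply, Matrix.cons_val_zero, Matrix.cons_val_one,
    Matrix.head_cons, Real.norm_eq_abs, sq_abs]
  linear_combination ((v 0 ^ 2 + v 1 ^ 2) / 4) * hs

lemma xiv_T_add_KD (a : ℝ) (ha : 0 < a) (m : ℤ × ℤ) :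
    xiv a (T m) + KD a = Rrot (xiv a m + KD a) := by
  have hs : Real.sqrt 3 * Real.sqrt 3 = 3 := Real.mul_self_sqrt (by norm_num)
  have hs0 : Real.sqrt 3 ≠ 0 := by positivity
  ext i
  fin_cases i
  all_goals simp only [xiv, KD, k1, k2, T, Rrot, vec, WithLp.equiv_symm_apply, PiLp.toLp_apply,
      PiLp.add_apply, PiLp.smul_apply, smul_eq_mul, Fin.mk_zero, Fin.mk_one,
      Matrix.cons_val_zero, Matrix.cons_val_one, Matrix.head_cons,
      Int.cast_sub, Int.cast_add, Int.cast_neg, Int.cast_one, Fin.isValue]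
  · field_simp
    linear_combination (1 + 3*(m.1:ℝ) - 3*(m.2:ℝ)) * hs
  · field_simp
    ring_nf

/-- ξ_{T(m)} + K = R(ξ_m + K), hence ‖ξ_{T(m)} + K‖ = ‖ξ_m + K‖. -/
theorem stmt_4 (a : ℝ) (ha : 0 < a) (m : ℤ × ℤ) :
    xiv a (T m) + KD a = Rrot (xiv a m + KD a) ∧
    ‖xiv a (T m) + KD a‖ = ‖xiv a m + KD a‖ := by
  exact ⟨xiv_T_add_KD a ha m, by rw [xiv_T_add_KD a ha m, norm_Rrot]⟩
end
end

section
/- For every m ∈ ℤ², the set {m' ∈ ℤ² : ‖ξ_{m'} + K‖ = ‖ξ_m + K‖} is finite and its cardinality is divisible by 3. -/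
open Real

noncomputable section

/-- The integer quadratic form controlling ‖ξ_m + K‖². -/
def Fq (m : ℤ × ℤ) : ℤ := 3*(m.1+m.2+1)^2 + (3*m.1-3*m.2+1)^2

lemma norm_sq_eq (a : ℝ) (ha : 0 < a) (m : ℤ × ℤ) :
    ‖xiv a m + KD a‖^2 = (4*π/(a*Real.sqrt 3))^2/12 * (Fq m : ℝ) := by
  rw [EuclideanSpace.norm_eq, Real.sq_sqrt (by positivity)]
  simp only [Fin.sum_univ_two, xiv, KD, k1, k2, vec, PiLp.add_apply, PiLp.smul_apply,
    smul_eq_mul, WithLp.equiv_symm_apply, PiLp.toLp_apply, Matrix.cons_val_zero, Matrix.cons_val_one,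
    Matrix.head_cons, Real.norm_eq_abs, sq_abs, Fq]
  have hs : Real.sqrt 3 ^ 2 = 3 := Real.sq_sqrt (by norm_num)
  have hs0 : Real.sqrt 3 ≠ 0 := by positivity
  have ha0 : a ≠ 0 := ne_of_gt ha
  push_cast
  field_simp
  ring_nf
  have h4 : Real.sqrt 3 ^ 4 = 9 := by nlinarith [hs]
  have h6 : Real.sqrt 3 ^ 6 = 27 := by nlinarith [hs]
  simp only [h4, h6, hs]
  ring

lemma mem_iff_Fq (a : ℝ) (ha : 0 < a) (m m' : ℤ × ℤ) :
    ‖xiv a m' + KD a‖ = ‖xiv a m + KD a‖ ↔ Fq m' = Fq m := by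
  have hpi : (0:ℝ) < π := Real.pi_pos
  have hc : (0:ℝ) < (4*π/(a*Real.sqrt 3))^2/12 := by positivity
  constructor
  · intro h
    have h2 : ‖xiv a m' + KD a‖^2 = ‖xiv a m + KD a‖^2 := by rw [h]
    rw [norm_sq_eq a ha, norm_sq_eq a ha] at h2
    exact_mod_cast mul_left_cancel₀ (ne_of_gt hc) h2
  · intro h
    have h2 : ‖xiv a m' + KD a‖^2 = ‖xiv a m + KD a‖^2 := by
      rw [norm_sq_eq a ha, norm_sq_eq a ha, h]
    nlinarith [norm_nonneg (xiv a m' + KD a), norm_nonneg (xiv a m + KD a)]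

lemma Fq_T (m : ℤ × ℤ) : Fq (T m) = Fq m := by
  simp only [Fq, T]
  ring

lemma T_T_T (m : ℤ × ℤ) : T (T (T m)) = m := by
  simp only [T, Prod.ext_iff]
  constructor <;> ring

lemma T_ne (m : ℤ × ℤ) : T m ≠ m := by
  intro h
  rw [T, Prod.ext_iff] at h
  simp only at h
  omega

lemma T_T_ne (m : ℤ × ℤ) : T (T m) ≠ m := by
  intro h
  rw [T, T, Prod.ext_iff] at h
  simp only at h
  omega

lemma card_div_three (s : Finset (ℤ × ℤ)) (hcl : ∀ x ∈ s, T x ∈ s) : 3 ∣ s.card := by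
  induction s using Finset.strongInduction with
  | _ s ih =>
    rcases s.eq_empty_or_nonempty with rfl | ⟨x, hx⟩
    · simp
    · have hTx : T x ∈ s := hcl x hx
      have hTTx : T (T x) ∈ s := hcl _ hTx
      set t : Finset (ℤ × ℤ) := {x, T x, T (T x)} with ht
      have htsub : t ⊆ s := by
        intro y hy
        simp only [ht, Finset.mem_insert, Finset.mem_singleton] at hy
        rcases hy with rfl | rfl | rfl <;> assumption
      have h1 : T x ≠ x := T_ne x
      have h2 : T (T x) ≠ x := T_T_ne x
      have h3 : T (T x) ≠ T x := T_ne (T x)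
      have hcardt : t.card = 3 := by
        rw [ht]
        rw [Finset.card_insert_of_notMem (by simp [h1.symm, h2.symm]),
          Finset.card_insert_of_notMem (by simp [h3.symm]), Finset.card_singleton]
      set s' := s \ t with hs'
      have hssub : s' ⊂ s := by
        refine Finset.sdiff_ssubset ?_ ?_
        · exact htsub
        · exact ⟨x, by simp [ht]⟩
      have hcl' : ∀ y ∈ s', T y ∈ s' := by
        intro y hy
        rw [hs', Finset.mem_sdiff] at hy ⊢
        refine ⟨hcl y hy.1, ?_⟩
        have hy2 := hy.2
        simp only [ht, Finset.mem_insert, Finset.mem_singleton] at hy2 ⊢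
        push_neg at hy2 ⊢
        obtain ⟨n1, n2, n3⟩ := hy2
        refine ⟨?_, ?_, ?_⟩
        · intro h; exact n3 (by rw [← T_T_T y, h])
        · intro h; exact n1 (by
            have := congrArg (fun z => T (T z)) h
            simpa [T_T_T] using this)
        · intro h; exact n2 (by
            have := congrArg (fun z => T (T z)) h
            rw [T_T_T y, show T (T (T (T x))) = T x from T_T_T (T x)] at this
            exact this)
      have hcard : s.card = s'.card + 3 := by
        rw [hs', Finset.card_sdiff_of_subset htsub, hcardt]
        have := Finset.card_le_card htsub
        omega
      have := ih s' hssub hcl'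
      omega

/-- for every m, the set of m' with ‖ξ_{m'} + K‖ = ‖ξ_m + K‖ is
finite and its cardinality is divisible by 3. -/
theorem stmt_6 (a : ℝ) (ha : 0 < a) (m : ℤ × ℤ) :
    {m' : ℤ × ℤ | ‖xiv a m' + KD a‖ = ‖xiv a m + KD a‖}.Finite ∧
    3 ∣ {m' : ℤ × ℤ | ‖xiv a m' + KD a‖ = ‖xiv a m + KD a‖}.ncard := by
  set S := {m' : ℤ × ℤ | ‖xiv a m' + KD a‖ = ‖xiv a m + KD a‖} with hS
  have hmem : ∀ m', m' ∈ S ↔ Fq m' = Fq m := fun m' => mem_iff_Fq a ha m m'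
  set N : ℤ := Fq m with hN
  have hNnonneg : 0 ≤ N := by
    rw [hN, Fq]
    positivity
  have hfin : S.Finite := by
    apply Set.Finite.subset (Set.finite_Icc ((-(N+1), -(N+1)) : ℤ × ℤ) ((N+1, N+1) : ℤ × ℤ))
    intro m' hm'
    have h := (hmem m').mp hm'
    rw [Fq] at h
    have hA : (m'.1 + m'.2 + 1)^2 ≤ N := by nlinarith [sq_nonneg (3*m'.1 - 3*m'.2 + 1)]
    have hB : (3*m'.1 - 3*m'.2 + 1)^2 ≤ N := by nlinarith [sq_nonneg (m'.1 + m'.2 + 1)]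
    have hA' : |m'.1 + m'.2 + 1| ≤ N := by nlinarith [abs_nonneg (m'.1 + m'.2 + 1), sq_abs (m'.1 + m'.2 + 1)]
    have hB' : |3*m'.1 - 3*m'.2 + 1| ≤ N := by nlinarith [abs_nonneg (3*m'.1 - 3*m'.2 + 1), sq_abs (3*m'.1 - 3*m'.2 + 1)]
    rw [abs_le] at hA' hB'
    simp only [Set.mem_Icc, Prod.le_def]
    omega
  refine ⟨hfin, ?_⟩
  rw [Set.ncard_eq_toFinset_card S hfin]
  apply card_div_three
  intro x hxmem
  rw [Set.Finite.mem_toFinset] at hxmem ⊢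
  rw [hmem] at hxmem ⊢
  rw [Fq_T, hxmem]
end
end

section
/- Let λ ∈ ℝ be such that λ ≠ ‖ξ_m + K‖² for every m ∈ ℤ². Then the function m ↦ exp(i·ξ_m·x₀)/(‖ξ_m + K‖² − λ)² is summable over ℤ² and ∑_{m ∈ ℤ²} exp(i·ξ_m·x₀)/(‖ξ_m + K‖² − λ)² = 0. -/
open Real

noncomputable section

@[simp] lemma vec_apply0 (x y : ℝ) : vec x y 0 = x := rfl
@[simp] lemma vec_apply1 (x y : ℝ) : vec x y 1 = y := rfl

open RealInnerProductSpace

lemma inner_xiv_x0 (a : ℝ) (ha : 0 < a) (m : ℤ × ℤ) :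
    ⟪xiv a m, x0 a⟫ = 4 * π * ((m.1 : ℝ) + m.2) / 3 := by
  simp only [xiv, x0, v1, v2, k1, k2, PiLp.inner_apply, Fin.sum_univ_two,
    PiLp.add_apply, PiLp.smul_apply, vec_apply0, vec_apply1, smul_eq_mul,
    RCLike.inner_apply, conj_trivial]
  have h3' : Real.sqrt 3 ≠ 0 := by positivity
  field_simp
  ring_nf

lemma norm_sq_xiv_KD (a : ℝ) (m : ℤ × ℤ) :
    ‖xiv a m + KD a‖ ^ 2 = (4 * π / (a * Real.sqrt 3)) ^ 2 *
      (((m.1:ℝ) + 2/3)^2 + ((m.2:ℝ) + 1/3)^2 - ((m.1:ℝ) + 2/3) * ((m.2:ℝ) + 1/3)) := by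
  have h3 : Real.sqrt 3 ^ 2 = 3 := Real.sq_sqrt (by norm_num)
  rw [← real_inner_self_eq_norm_sq]
  simp only [xiv, KD, k1, k2, PiLp.inner_apply, Fin.sum_univ_two,
    PiLp.add_apply, PiLp.smul_apply, vec_apply0, vec_apply1, smul_eq_mul,
    RCLike.inner_apply, conj_trivial]
  nlinarith [h3, sq_nonneg (Real.sqrt 3)]

def Teq : ℤ × ℤ ≃ ℤ × ℤ where
  toFun := T
  invFun n := (-n.2 - 1, n.1 - n.2)
  left_inv m := by simp [T]
  right_inv n := by simp [T]

lemma norm_T (a : ℝ) (m : ℤ × ℤ) :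
    ‖xiv a (T m) + KD a‖ ^ 2 = ‖xiv a m + KD a‖ ^ 2 := by
  rw [norm_sq_xiv_KD, norm_sq_xiv_KD]
  simp only [T]
  push_cast
  ring

lemma phase_T (a : ℝ) (ha : 0 < a) (m : ℤ × ℤ) :
    Complex.exp (Complex.I * (⟪xiv a (T m), x0 a⟫ : ℝ)) =
      Complex.exp (-(2 * π) * Complex.I / 3) *
        Complex.exp (Complex.I * (⟪xiv a m, x0 a⟫ : ℝ)) := by
  rw [inner_xiv_x0 a ha, inner_xiv_x0 a ha]
  have key : Complex.I * ((4 * π * (((T m).1 : ℝ) + ((T m).2 : ℝ)) / 3 : ℝ) : ℂ) =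
      ((-2 * m.1 - 1 : ℤ) : ℂ) * (2 * π * Complex.I) +
        (-(2 * π) * Complex.I / 3 + Complex.I * ((4 * π * ((m.1:ℝ) + m.2) / 3 : ℝ) : ℂ)) := by
    simp only [T]
    push_cast
    ring
  rw [key, Complex.exp_add, Complex.exp_int_mul_two_pi_mul_I, one_mul, Complex.exp_add]

lemma int_le_sq (n : ℤ) : n ≤ n ^ 2 := by nlinarith [sq_nonneg n, sq_nonneg (n-1)]

lemma summable_aux : Summable (fun n : ℤ => 1 / (1 + (n:ℝ)^2)) := by
  apply Summable.of_norm_bounded_eventually (g := fun n : ℤ => 1/(n:ℝ)^2)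
    (summable_one_div_int_pow.mpr one_lt_two)
  rw [Filter.eventually_cofinite]
  apply Set.Finite.subset (Set.finite_singleton (0:ℤ))
  intro n hn
  simp only [Set.mem_setOf_eq, not_le] at hn
  simp only [Set.mem_singleton_iff]
  by_contra h0
  have hn2 : (0:ℝ) < (n:ℝ)^2 := by positivity
  have : ‖1 / (1 + (n:ℝ)^2)‖ = 1 / (1 + (n:ℝ)^2) := by
    rw [Real.norm_eq_abs, abs_of_pos]; positivity
  rw [this] at hn
  have : 1 / (1 + (n:ℝ)^2) ≤ 1 / (n:ℝ)^2 := by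
    apply one_div_le_one_div_of_le hn2; linarith
  linarith

lemma sq_aux1 (n : ℤ) : (n:ℝ)^2 / 9 ≤ ((n:ℝ) + 2/3)^2 := by
  rcases (by omega : n ≤ -1 ∨ 0 ≤ n) with h | h
  · have : (n:ℝ) ≤ -1 := by exact_mod_cast h
    nlinarith
  · have : (0:ℝ) ≤ (n:ℝ) := by exact_mod_cast h
    nlinarith

lemma sq_aux2 (n : ℤ) : (n:ℝ)^2 / 9 ≤ ((n:ℝ) + 1/3)^2 := by
  rcases (by omega : n ≤ -1 ∨ 0 ≤ n) with h | h
  · have : (n:ℝ) ≤ -1 := by exact_mod_cast h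
    nlinarith
  · have : (0:ℝ) ≤ (n:ℝ) := by exact_mod_cast h
    nlinarith

lemma norm_lower (a : ℝ) (m : ℤ × ℤ) :
    (4 * π / (a * Real.sqrt 3)) ^ 2 / 18 * (((m.1:ℝ))^2 + ((m.2:ℝ))^2)
      ≤ ‖xiv a m + KD a‖ ^ 2 := by
  rw [norm_sq_xiv_KD]
  have h1 := sq_aux1 m.1
  have h2 := sq_aux2 m.2
  have hc : (0:ℝ) ≤ (4 * π / (a * Real.sqrt 3)) ^ 2 := sq_nonneg _
  nlinarith [sq_nonneg (((m.1:ℝ) + 2/3) - ((m.2:ℝ) + 1/3)), hc,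
    mul_nonneg hc (sq_nonneg ((m.1:ℝ) + 2/3))]

open RealInnerProductSpace in
/-- m ↦ exp(i ξ_m·x₀)/(‖ξ_m + K‖² − λ)² is summable over ℤ²
with sum zero. -/
theorem stmt_10 (a : ℝ) (ha : 0 < a) (lam : ℝ)
    (hlam : ∀ m : ℤ × ℤ, lam ≠ ‖xiv a m + KD a‖ ^ 2) :
    Summable (fun m : ℤ × ℤ =>
      Complex.exp (Complex.I * (⟪xiv a m, x0 a⟫ : ℝ)) /
        ((‖xiv a m + KD a‖ ^ 2 - lam : ℝ) : ℂ) ^ 2) ∧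
    ∑' m : ℤ × ℤ,
      Complex.exp (Complex.I * (⟪xiv a m, x0 a⟫ : ℝ)) /
        ((‖xiv a m + KD a‖ ^ 2 - lam : ℝ) : ℂ) ^ 2 = 0 := by
  set f : ℤ × ℤ → ℂ := fun m =>
      Complex.exp (Complex.I * (⟪xiv a m, x0 a⟫ : ℝ)) /
        ((‖xiv a m + KD a‖ ^ 2 - lam : ℝ) : ℂ) ^ 2 with hf
  set c : ℝ := 4 * π / (a * Real.sqrt 3) with hcdef
  have hc : 0 < c := by
    apply div_pos (by positivity)
    positivity
  -- norm of f
  have hnormf : ∀ m, ‖f m‖ = 1 / (‖xiv a m + KD a‖ ^ 2 - lam) ^ 2 := by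
    intro m
    rw [hf]
    simp only [norm_div, norm_pow, Complex.norm_real]
    rw [Complex.norm_exp]
    have : (Complex.I * ((⟪xiv a m, x0 a⟫ : ℝ) : ℂ)).re = 0 := by simp
    rw [this, Real.exp_zero]
    rw [Real.norm_eq_abs, ← abs_pow, abs_of_nonneg (by positivity)]
  set β : ℝ := min (c ^ 2 / 72) (1/2) with hβdef
  have hβ : 0 < β := by
    apply lt_min (by positivity) (by norm_num)
  -- summability
  have hsummable : Summable f := by
    apply Summable.of_norm_bounded_eventually
      (g := fun m : ℤ × ℤ => β⁻¹ ^ 2 * ((1 / (1 + (m.1:ℝ)^2)) * (1 / (1 + (m.2:ℝ)^2))))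
    · exact (Summable.mul_of_nonneg summable_aux summable_aux
        (fun n => by positivity) (fun n => by positivity)).mul_left _
    · rw [Filter.eventually_cofinite]
      set M : ℤ := ⌈18 * (2 * |lam| + 2) / c ^ 2⌉ with hM
      apply Set.Finite.subset (Set.finite_Icc ((-M, -M) : ℤ × ℤ) (M, M))
      intro m hm
      simp only [Set.mem_setOf_eq] at hm
      -- show the bound holds whenever m is outside the box, contrapositive
      by_contra hbox
      apply hm; clear hm
      -- outside box means m.1^2+m.2^2 > M in particular the energy is large
      have hout : ¬ (m.1 ^ 2 + m.2 ^ 2 ≤ M) := by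
        intro hle
        apply hbox
        simp only [Set.mem_Icc, Prod.le_def]
        have h1 := int_le_sq m.1
        have h2 := int_le_sq m.2
        have h1' := int_le_sq (-m.1)
        have h2' := int_le_sq (-m.2)
        have hs1 := sq_nonneg m.1
        have hs2 := sq_nonneg m.2
        constructor <;> constructor <;> nlinarith
      have hMlt : (M : ℝ) < (m.1:ℝ)^2 + (m.2:ℝ)^2 := by
        push_cast
        have : M < m.1 ^ 2 + m.2 ^ 2 := by omega
        exact_mod_cast this
      have hlarge : 2 * |lam| + 2 ≤ c ^ 2 / 18 * (((m.1:ℝ))^2 + ((m.2:ℝ))^2) := by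
        have hceil : 18 * (2 * |lam| + 2) / c ^ 2 ≤ (M:ℝ) := Int.le_ceil _
        have hc2 : (0:ℝ) < c ^ 2 := by positivity
        rw [div_le_iff₀ hc2] at hceil
        nlinarith
      have hN := norm_lower a m
      rw [← hcdef] at hN
      set N : ℝ := ‖xiv a m + KD a‖ ^ 2 with hNdef
      have hN2 : 2 * |lam| + 2 ≤ N := le_trans hlarge hN
      have hden : β * (1 + ((m.1:ℝ)^2 + (m.2:ℝ)^2)) ≤ N - lam := by
        have hb1 : β ≤ c ^ 2 / 72 := min_le_left _ _
        have hb2 : β ≤ 1/2 := min_le_right _ _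
        have habs : lam ≤ |lam| := le_abs_self lam
        have hsq : (0:ℝ) ≤ (m.1:ℝ)^2 + (m.2:ℝ)^2 := by positivity
        nlinarith
      rw [hnormf m]
      have hpos : (0:ℝ) < β * (1 + ((m.1:ℝ)^2 + (m.2:ℝ)^2)) := by positivity
      have hd : (β * (1 + ((m.1:ℝ)^2 + (m.2:ℝ)^2))) ^ 2 ≤ (N - lam) ^ 2 := by
        apply pow_le_pow_left₀ (le_of_lt hpos) hden
      have step1 : 1 / (N - lam) ^ 2 ≤ 1 / (β * (1 + ((m.1:ℝ)^2 + (m.2:ℝ)^2))) ^ 2 := by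
        apply one_div_le_one_div_of_le (by positivity) hd
      apply le_trans step1
      have hstep2 : 1 / (β * (1 + ((m.1:ℝ)^2 + (m.2:ℝ)^2))) ^ 2
          = β⁻¹ ^ 2 * (1 / (1 + ((m.1:ℝ)^2 + (m.2:ℝ)^2)) ^ 2) := by
        rw [mul_pow]
        field_simp
      rw [hstep2]
      apply mul_le_mul_of_nonneg_left ?_ (by positivity)
      rw [div_mul_div_comm, one_mul,
        div_le_div_iff₀ (by positivity) (by positivity)]
      nlinarith [sq_nonneg ((m.1:ℝ) * (m.2:ℝ)), sq_nonneg ((m.1:ℝ)^2 - (m.2:ℝ)^2),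
        sq_nonneg ((m.1:ℝ)), sq_nonneg ((m.2:ℝ))]
  refine ⟨hsummable, ?_⟩
  -- the symmetry argument
  set ω : ℂ := Complex.exp (-(2 * π) * Complex.I / 3) with hω
  have hfT : ∀ m, f (T m) = ω * f m := by
    intro m
    rw [hf]
    simp only
    rw [phase_T a ha, norm_T, mul_div_assoc]
  have htsum : ∑' m, f (Teq m) = ∑' m, f m := Teq.tsum_eq f
  have h2 : ∑' m, f (Teq m) = ω * ∑' m, f m := by
    have : (fun m => f (Teq m)) = fun m => ω * f m := by
      funext m; exact hfT m
    rw [this, tsum_mul_left]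
  have hωne : ω ≠ 1 := by
    intro h1
    rw [hω, Complex.exp_eq_one_iff] at h1
    obtain ⟨n, hn⟩ := h1
    have hC : ((-(2*π)/3 : ℝ) : ℂ) * Complex.I = (((n : ℝ) * (2*π) : ℝ) : ℂ) * Complex.I := by
      push_cast
      linear_combination hn
    have hR : (-(2*π)/3 : ℝ) = (n : ℝ) * (2*π) := by
      have := mul_right_cancel₀ Complex.I_ne_zero hC
      exact_mod_cast this
    have hπ := Real.pi_pos
    have h3 : π * (3*(n:ℝ)+1) = 0 := by linear_combination (-3/2) * hR
    have h4 : (3*(n:ℝ)+1) = 0 := by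
      rcases mul_eq_zero.mp h3 with h | h
      · exact absurd h (ne_of_gt hπ)
      · exact h
    have : ((3 * n + 1 : ℤ) : ℝ) = 0 := by push_cast; linarith
    have : (3 * n + 1 : ℤ) = 0 := by exact_mod_cast this
    omega
  have key : ω * ∑' m, f m = ∑' m, f m := by rw [← h2, htsum]
  have hz : (ω - 1) * ∑' m, f m = 0 := by linear_combination key
  rcases mul_eq_zero.mp hz with h | h
  · exact (hωne (sub_eq_zero.mp h)).elim
  · exact h
end
end

section
/- Let c ∈ ℂ² satisfy exp(iπ/3)·(c·v₁) = c·v₂, where the dot product of a ℂ²-vector with an ℝ²-vector is the bilinear extension of the Euclidean inner product. Then for every unit vector u ∈ ℝ², |c·u| = |c·v₁|/a. In particular, u ↦ |c·u| is constant on the unit circle. -/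
open Real

noncomputable section

/-- The bilinear dot product of a ℂ²-vector with a vector of ℝ². -/
def cdot (c : Fin 2 → ℂ) (v : E2) : ℂ := c 0 * (v 0 : ℝ) + c 1 * (v 1 : ℝ)

/-- if exp(iπ/3)·(c·v₁) = c·v₂, then |c·u| = |c·v₁|/a for every
unit vector u ∈ ℝ²; in particular u ↦ |c·u| is constant on the unit circle. -/
theorem stmt_14 (a : ℝ) (ha : 0 < a) (c : Fin 2 → ℂ)
    (hc : Complex.exp (Complex.I * (π / 3 : ℝ)) * cdot c (v1 a) = cdot c (v2 a)) :
    ∀ u : E2, ‖u‖ = 1 → ‖cdot c u‖ = ‖cdot c (v1 a)‖ / a := by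
  have hs3 : (Real.sqrt 3 : ℂ) ^ 2 = 3 := by
    rw [← Complex.ofReal_pow, Real.sq_sqrt (by norm_num : (3:ℝ) ≥ 0)]; norm_num
  have he : Complex.exp (Complex.I * (π / 3 : ℝ)) =
      (1/2 : ℝ) + (Real.sqrt 3 / 2 : ℝ) * Complex.I := by
    rw [mul_comm, Complex.exp_mul_I, ← Complex.ofReal_cos, ← Complex.ofReal_sin,
      Real.cos_pi_div_three, Real.sin_pi_div_three]
  rw [he] at hc
  simp only [cdot, v1, v2, vec, PiLp.smul_apply, WithLp.equiv_symm_apply, PiLp.toLp_apply,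
    Matrix.cons_val_zero, Matrix.cons_val_one, Matrix.head_cons, smul_eq_mul] at hc
  push_cast at hc
  have ha' : (a : ℂ) ≠ 0 := by exact_mod_cast ha.ne'
  have hkey : ((a : ℂ)/4) * (3 + Real.sqrt 3 * Complex.I) * (c 1 + Complex.I * c 0) = 0 := by
    linear_combination hc + ((a:ℂ) * Real.sqrt 3 / 4 * c 0) * Complex.I_sq - ((a:ℂ) * Complex.I * c 0 / 4) * hs3
  have hne : ((a : ℂ)/4) * (3 + Real.sqrt 3 * Complex.I) ≠ 0 := by
    apply mul_ne_zero (by simpa using ha')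
    intro h
    have h3 : (3 + (Real.sqrt 3 : ℂ) * Complex.I).re = 0 := by rw [h]; simp
    simp at h3
  have hc1 : c 1 = -(Complex.I * c 0) :=
    eq_neg_of_add_eq_zero_left ((mul_eq_zero.mp hkey).resolve_left hne)
  have habs : ∀ x y : ℝ, ‖(x:ℂ) - (y:ℂ) * Complex.I‖ = Real.sqrt (x^2 + y^2) := by
    intro x y
    rw [Complex.norm_def, Complex.normSq_apply]
    simp
    ring_nf
  have hv1 : ‖cdot c (v1 a)‖ = ‖c 0‖ * a := by
    have h1 : cdot c (v1 a) = c 0 * (((a*(Real.sqrt 3/2):ℝ):ℂ) - ((a*(1/2):ℝ):ℂ) * Complex.I) := by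
      simp only [cdot, v1, vec, PiLp.smul_apply, WithLp.equiv_symm_apply, PiLp.toLp_apply,
        Matrix.cons_val_zero, Matrix.cons_val_one, Matrix.head_cons, smul_eq_mul, hc1]
      push_cast
      ring
    rw [h1, norm_mul, habs]
    have h2 : (a*(Real.sqrt 3/2))^2 + (a*(1/2))^2 = a^2 := by
      have h3 : Real.sqrt 3 ^ 2 = 3 := Real.sq_sqrt (by norm_num)
      nlinarith [h3]
    rw [h2, Real.sqrt_sq ha.le]
  intro u hu
  have h2 : (u 0)*(u 0) + (u 1)*(u 1) = 1 := by
    have h := real_inner_self_eq_norm_sq u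
    rw [hu] at h
    simp only [PiLp.inner_apply, Fin.sum_univ_two, RCLike.inner_apply, conj_trivial] at h
    linarith
  have hcu : cdot c u = c 0 * (((u 0 : ℝ):ℂ) - ((u 1 : ℝ):ℂ) * Complex.I) := by
    rw [cdot, hc1]; ring
  rw [hcu, norm_mul, habs, hv1]
  have : (u 0)^2 + (u 1)^2 = 1 := by nlinarith [h2]
  rw [this, Real.sqrt_one, mul_one]
  field_simp
end
end

section
/- Let Rot denote the rotation of ℝ² by π/3, i.e. the matrix (1/2)[[1, −√3], [√3, 1]], and define S : ℤ² → ℤ² by S(m₁, m₂) = (m₂, m₂ − m₁). Then for every m ∈ ℤ², Rot(ξ_m) = ξ_{S(m)}; moreover, for every nonzero m ∈ ℤ², the set {m' ∈ ℤ² : ‖ξ_{m'}‖ = ‖ξ_m‖} is finite and its cardinality is divisible by 6. -/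
open Real

noncomputable section

/-- Rotation of ℝ² by π/3, i.e. the matrix (1/2)[[1, −√3], [√3, 1]]. -/
def Rot6 (v : E2) : E2 :=
  vec ((v 0 - Real.sqrt 3 * v 1) / 2) ((Real.sqrt 3 * v 0 + v 1) / 2)

/-- S(m₁, m₂) = (m₂, m₂ − m₁), the π/3-rotation on dual lattice indices. -/
def S (m : ℤ × ℤ) : ℤ × ℤ := (m.2, m.2 - m.1)

/- ---------- auxiliary lemmas ---------- -/

/-- The quadratic form giving the squared norm of ξ_m (up to a positive constant). -/
def Qf (m : ℤ × ℤ) : ℤ := m.1^2 - m.1*m.2 + m.2^2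

lemma xiv0 (a : ℝ) (m : ℤ × ℤ) :
    xiv a m 0 = 4 * π / (a * Real.sqrt 3) * ((m.1 + m.2) / 2) := by
  simp [xiv, k1, k2, vec, WithLp.equiv_symm_apply, PiLp.toLp_apply, PiLp.add_apply, PiLp.smul_apply]
  ring

lemma xiv1 (a : ℝ) (m : ℤ × ℤ) :
    xiv a m 1 = 4 * π / (a * Real.sqrt 3) * (Real.sqrt 3 * (m.1 - m.2) / 2) := by
  simp [xiv, k1, k2, vec, WithLp.equiv_symm_apply, PiLp.toLp_apply, PiLp.add_apply, PiLp.smul_apply]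
  ring

lemma sqrt3_sq : Real.sqrt 3 ^ 2 = 3 := Real.sq_sqrt (by norm_num)

lemma rot_xiv (a : ℝ) (m : ℤ × ℤ) : Rot6 (xiv a m) = xiv a (S m) := by
  ext i
  fin_cases i
  · show Rot6 (xiv a m) 0 = xiv a (S m) 0
    rw [show Rot6 (xiv a m) 0 = (xiv a m 0 - Real.sqrt 3 * xiv a m 1) / 2 from by
      simp [Rot6, vec, WithLp.equiv_symm_apply, PiLp.toLp_apply], xiv0, xiv0, xiv1]
    simp only [S]
    push_cast
    ring_nf
    rw [sqrt3_sq]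
    ring
  · show Rot6 (xiv a m) 1 = xiv a (S m) 1
    rw [show Rot6 (xiv a m) 1 = (Real.sqrt 3 * xiv a m 0 + xiv a m 1) / 2 from by
      simp [Rot6, vec, WithLp.equiv_symm_apply, PiLp.toLp_apply], xiv1, xiv0, xiv1]
    simp only [S]
    push_cast
    ring_nf

lemma normsq (a : ℝ) (m : ℤ × ℤ) :
    ‖xiv a m‖^2 = (4 * π / (a * Real.sqrt 3))^2 * ((Qf m : ℤ) : ℝ) := by
  rw [EuclideanSpace.norm_eq]
  rw [Real.sq_sqrt (by positivity)]
  rw [Fin.sum_univ_two, xiv0, xiv1, Real.norm_eq_abs, Real.norm_eq_abs, sq_abs, sq_abs]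
  simp only [Qf]
  push_cast
  ring_nf
  rw [sqrt3_sq]
  ring

lemma norm_iff (a : ℝ) (ha : 0 < a) (m m' : ℤ × ℤ) :
    ‖xiv a m'‖ = ‖xiv a m‖ ↔ Qf m' = Qf m := by
  have hs3 : (0:ℝ) < Real.sqrt 3 := Real.sqrt_pos.mpr (by norm_num)
  have hc2 : (0:ℝ) < (4 * π / (a * Real.sqrt 3))^2 := by
    have := Real.pi_pos
    positivity
  constructor
  · intro h
    have h2 : ‖xiv a m'‖^2 = ‖xiv a m‖^2 := by rw [h]
    rw [normsq, normsq] at h2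
    have := mul_left_cancel₀ (ne_of_gt hc2) h2
    exact_mod_cast this
  · intro h
    rw [← Real.sqrt_sq (norm_nonneg (xiv a m')), ← Real.sqrt_sq (norm_nonneg (xiv a m)),
      normsq, normsq, h]

lemma Qzero (m : ℤ × ℤ) (h : Qf m = 0) : m = 0 := by
  simp only [Qf] at h
  have h1 : m.1 = 0 := by nlinarith [sq_nonneg (m.1 - m.2), sq_nonneg m.1, sq_nonneg m.2]
  have h2 : m.2 = 0 := by nlinarith [sq_nonneg (m.1 - m.2), sq_nonneg m.1, sq_nonneg m.2]
  exact Prod.ext h1 h2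

lemma Qfin (n : ℤ) : {m' : ℤ × ℤ | Qf m' = n}.Finite := by
  apply Set.Finite.subset
    ((Set.finite_Icc (-(2*n+1)) (2*n+1)).prod (Set.finite_Icc (-(2*n+1)) (2*n+1)))
  intro p hp
  simp only [Set.mem_setOf_eq, Qf] at hp
  simp only [Set.mem_prod, Set.mem_Icc]
  refine ⟨⟨?_, ?_⟩, ?_, ?_⟩ <;>
    nlinarith [sq_nonneg (p.1 - p.2), sq_nonneg (p.1 + p.2), sq_nonneg p.1, sq_nonneg p.2,
      sq_nonneg (p.1 - 1), sq_nonneg (p.1 + 1), sq_nonneg (p.2 - 1), sq_nonneg (p.2 + 1)]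

lemma QS (m : ℤ × ℤ) : Qf (S m) = Qf m := by
  simp only [Qf, S]
  ring

lemma Siter6 (m : ℤ × ℤ) : S^[6] m = m := by
  show S (S (S (S (S (S m))))) = m
  simp only [S]
  exact Prod.ext (by ring) (by ring)

lemma Sfree (m : ℤ × ℤ) (i : ℕ) (h1 : 0 < i) (h2 : i < 6) (h : S^[i] m = m) : m = 0 := by
  interval_cases i <;>
  · simp only [Function.iterate_succ, Function.iterate_zero, Function.comp_apply, id_eq,
      S, Prod.ext_iff] at h
    rw [Prod.ext_iff]
    simp only [Prod.fst_zero, Prod.snd_zero]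
    omega

lemma orbit6 {α : Type*} [DecidableEq α] (f : α → α) :
    ∀ (n : ℕ) (s : Finset α), s.card = n → (∀ x ∈ s, f x ∈ s) →
      (∀ x ∈ s, f^[6] x = x) →
      (∀ x ∈ s, ∀ i, 0 < i → i < 6 → f^[i] x ≠ x) → 6 ∣ s.card := by
  intro n
  induction n using Nat.strong_induction_on with
  | _ n ih =>
    intro s hcard hmap hper hfree
    rcases s.eq_empty_or_nonempty with rfl | ⟨x, hx⟩
    · simp
    · have hit : ∀ i, f^[i] x ∈ s := by
        intro i
        induction i with
        | zero => simpa using hx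
        | succ k ihk => rw [Function.iterate_succ_apply']; exact hmap _ ihk
      have hinj : ∀ u ∈ s, ∀ v ∈ s, f u = f v → u = v := by
        intro u hu v hv huv
        have h1 : f^[5] (f u) = u := by
          rw [← Function.iterate_succ_apply]; exact hper u hu
        have h2 : f^[5] (f v) = v := by
          rw [← Function.iterate_succ_apply]; exact hper v hv
        rw [← h1, ← h2, huv]
      have key : ∀ p q : ℕ, p < q → q < 6 → f^[p] x = f^[q] x → False := by
        intro p q hpq hq6 hpqx
        have h6 : f^[6 - q] (f^[q] x) = x := by
          rw [← Function.iterate_add_apply, show 6 - q + q = 6 by omega]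
          exact hper x hx
        have : f^[6 - q + p] x = x := by
          calc f^[6 - q + p] x = f^[6 - q] (f^[p] x) := Function.iterate_add_apply f _ p x
          _ = f^[6 - q] (f^[q] x) := by rw [hpqx]
          _ = x := h6
        exact hfree x hx (6 - q + p) (by omega) (by omega) this
      set o : Finset α := (Finset.range 6).image (fun i => f^[i] x) with ho
      have hos : o ⊆ s := by
        intro y hy
        simp only [ho, Finset.mem_image, Finset.mem_range] at hy
        obtain ⟨i, _, rfl⟩ := hy
        exact hit i
      have hcardo : o.card = 6 := by
        rw [ho, Finset.card_image_of_injOn, Finset.card_range]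
        intro i hi j hj hij
        simp only [Finset.mem_coe, Finset.mem_range] at hi hj
        dsimp only at hij
        rcases lt_trichotomy i j with h | h | h
        · exact absurd hij (fun hh => key i j h hj hh)
        · exact h
        · exact absurd hij.symm (fun hh => key j i h hi hh)
      set s' := s \ o with hs'
      have hsub : s'.card = s.card - 6 := by rw [hs', Finset.card_sdiff_of_subset hos, hcardo]
      have h6le : 6 ≤ s.card := hcardo ▸ Finset.card_le_card hos
      have hmap' : ∀ y ∈ s', f y ∈ s' := by
        intro y hy
        rw [hs', Finset.mem_sdiff] at hy ⊢
        obtain ⟨hys, hyo⟩ := hy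
        refine ⟨hmap y hys, fun hfo => ?_⟩
        simp only [ho, Finset.mem_image, Finset.mem_range] at hfo
        obtain ⟨i, hi, hfi⟩ := hfo
        apply hyo
        rcases Nat.eq_zero_or_pos i with rfl | hpos
        · have h5 : f (f^[5] x) = x := by
            have := hper x hx
            rwa [show (6:ℕ) = 5 + 1 from rfl, Function.iterate_succ_apply'] at this
          have : f y = f (f^[5] x) := by
            rw [h5]; simpa using hfi.symm
          have := hinj y hys _ (hit 5) this
          simp only [ho, Finset.mem_image, Finset.mem_range]
          exact ⟨5, by omega, this.symm⟩
        · have hstep : f^[i] x = f (f^[i-1] x) := by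
            conv_lhs => rw [show i = (i-1) + 1 by omega]
            rw [Function.iterate_succ_apply']
          have : f y = f (f^[i-1] x) := hfi.symm.trans hstep
          have := hinj y hys _ (hit (i-1)) this
          simp only [ho, Finset.mem_image, Finset.mem_range]
          exact ⟨i - 1, by omega, this.symm⟩
      have hdvd' : 6 ∣ s'.card := by
        refine ih s'.card (by omega) s' rfl hmap'
          (fun y hy => hper y (Finset.mem_sdiff.mp hy).1)
          (fun y hy => hfree y (Finset.mem_sdiff.mp hy).1)
      omega

/-- Rot(ξ_m) = ξ_{S(m)}; and for nonzero m, the set of m' with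
‖ξ_{m'}‖ = ‖ξ_m‖ is finite of cardinality divisible by 6. -/
theorem stmt_18 (a : ℝ) (ha : 0 < a) :
    (∀ m : ℤ × ℤ, Rot6 (xiv a m) = xiv a (S m)) ∧
    (∀ m : ℤ × ℤ, m ≠ 0 →
      {m' : ℤ × ℤ | ‖xiv a m'‖ = ‖xiv a m‖}.Finite ∧
      6 ∣ {m' : ℤ × ℤ | ‖xiv a m'‖ = ‖xiv a m‖}.ncard) := by
  refine ⟨fun m => rot_xiv a m, fun m hm => ?_⟩
  have hset : {m' : ℤ × ℤ | ‖xiv a m'‖ = ‖xiv a m‖} = {m' : ℤ × ℤ | Qf m' = Qf m} :=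
    Set.ext fun m' => norm_iff a ha m m'
  rw [hset]
  have hfin : {m' : ℤ × ℤ | Qf m' = Qf m}.Finite := Qfin (Qf m)
  refine ⟨hfin, ?_⟩
  have hQm : Qf m ≠ 0 := fun h => hm (Qzero m h)
  rw [Set.ncard_eq_toFinset_card _ hfin]
  refine orbit6 S hfin.toFinset.card hfin.toFinset rfl ?_ ?_ ?_
  · intro y hy
    rw [Set.Finite.mem_toFinset] at hy ⊢
    simpa [QS] using hy
  · intro y _
    exact Siter6 y
  · intro y hy i hi1 hi2 hiter
    rw [Set.Finite.mem_toFinset] at hy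
    have : y = 0 := Sfree y i hi1 hi2 hiter
    apply hQm
    rw [← hy, this]
    simp [Qf]
end
end
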